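/- Let L : ℝ^p → ℝ be L_smooth-smooth and bounded below by 0, and let {x_t} be generated by gradient descent x_{t+1} = x_t − η_t ∇L(x_t) with positive step sizes satisfying η_t ≤ 1/L_smooth for all t ≥ T₀, ∑ η_t = ∞, and ∑ η_t² < ∞. Then ∑_{t≥T₀} η_t ‖∇L(x_t)‖² < ∞ and consequently liminf_{t→∞} ‖∇L(x_t)‖ = 0; moreover L(x_t) converges to a finite limit. -/

import Mathlib

/-!
For an `Ls`-smooth function the descent lemma
`L (x + v) ≤ L x + ⟪∇L x, v⟫ + Ls / 2 * ‖v‖ ^ 2` shows that a gradient step with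
`η_t ≤ 1 / Ls` lowers the loss by at least `η_t / 2 * ‖∇L (x_t)‖ ^ 2`. From `T₀` on the losses
are therefore antitone and, being nonnegative, convergent, and telescoping bounds the partial
sums of `η_t * ‖∇L (x_t)‖ ^ 2`. If the gradient norms eventually stayed above some `ε > 0`,
comparison with this series would make `∑ η_t` summable.
-/

open Filter

-- `s ↦ φ s - s * φ' 0 - K / 2 * s ^ 2` has nonpositive derivative on `[0, 1]`.
lemma image_one_le_of_hasDerivAt_le {φ φ' : ℝ → ℝ} {K : ℝ}
    (hφ : ∀ s, HasDerivAt φ (φ' s) s) (hφ' : ∀ s ∈ Set.Ioo (0 : ℝ) 1, φ' s ≤ φ' 0 + K * s) :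
    φ 1 ≤ φ 0 + φ' 0 + K / 2 := by
  set ψ : ℝ → ℝ := fun s => φ s - s * φ' 0 - K / 2 * s ^ 2
  have hψ : ∀ s, HasDerivAt ψ (φ' s - φ' 0 - K * s) s := fun s => by
    have hlin : HasDerivAt (fun s => s * φ' 0) (φ' 0) s := by
      simpa using (hasDerivAt_id s).mul_const (φ' 0)
    have hquad : HasDerivAt (fun s => K / 2 * s ^ 2) (K * s) s := by
      refine ((hasDerivAt_pow 2 s).const_mul (K / 2)).congr_deriv ?_
      norm_num
      ring
    exact ((hφ s).sub hlin).sub hquad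
  have hanti : AntitoneOn ψ (Set.Icc 0 1) := by
    refine antitoneOn_of_hasDerivWithinAt_nonpos (convex_Icc 0 1)
      (fun s _ => (hψ s).continuousAt.continuousWithinAt) (fun s _ => (hψ s).hasDerivWithinAt)
      fun s hs => ?_
    rw [interior_Icc] at hs
    linarith [hφ' s hs]
  have := hanti (by simp) (by simp) zero_le_one
  simp only [ψ] at this
  linarith

variable {E : Type*} [NormedAddCommGroup E] [InnerProductSpace ℝ E] [CompleteSpace E]

lemma hasDerivAt_comp_add_smul {f : E → ℝ} (hf : Differentiable ℝ f) (x v : E) (s : ℝ) :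
    HasDerivAt (fun s : ℝ => f (x + s • v)) (inner ℝ (gradient f (x + s • v)) v) s := by
  have hline : HasDerivAt (fun s : ℝ => x + s • v) v s := by
    simpa using ((hasDerivAt_id s).smul_const v).const_add x
  simpa [InnerProductSpace.toDual_apply_apply, Function.comp_def] using
    (hf _).hasGradientAt.hasFDerivAt.comp_hasDerivAt s hline

lemma le_add_inner_gradient_add_of_lipschitz_gradient {f : E → ℝ} (hf : Differentiable ℝ f)
    {K : ℝ} (hK : ∀ x y, ‖gradient f x - gradient f y‖ ≤ K * ‖x - y‖) (x v : E) :
    f (x + v) ≤ f x + inner ℝ (gradient f x) v + K / 2 * ‖v‖ ^ 2 := by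
  have key := image_one_le_of_hasDerivAt_le (K := K * ‖v‖ ^ 2)
    (hasDerivAt_comp_add_smul hf x v) fun s hs => by
      have hnorm : ‖x + s • v - x‖ = s * ‖v‖ := by simp [norm_smul, abs_of_pos hs.1]
      calc inner ℝ (gradient f (x + s • v)) v
          = inner ℝ (gradient f x) v + inner ℝ (gradient f (x + s • v) - gradient f x) v := by
            rw [inner_sub_left]; ring
        _ ≤ inner ℝ (gradient f x) v + K * ‖x + s • v - x‖ * ‖v‖ := by
            gcongr
            exact (real_inner_le_norm _ _).trans (by gcongr; exact hK _ _)
        _ = inner ℝ (gradient f (x + (0 : ℝ) • v)) v + K * ‖v‖ ^ 2 * s := by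
            rw [hnorm, zero_smul, add_zero]; ring
  simp only [one_smul, zero_smul, add_zero] at key
  linarith

lemma mul_le_one_of_le_one_div {a b : ℝ} (ha : 0 ≤ a) (hab : a ≤ 1 / b) : b * a ≤ 1 := by
  rcases le_or_gt b 0 with hb | hb
  · nlinarith
  · rwa [le_div_iff₀ hb, mul_comm] at hab

lemma gradient_step_add_le {f : E → ℝ} (hf : Differentiable ℝ f)
    {K : ℝ} (hK : ∀ x y, ‖gradient f x - gradient f y‖ ≤ K * ‖x - y‖)
    {η : ℝ} (hη : 0 ≤ η) (hηK : η ≤ 1 / K) (x : E) :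
    f (x - η • gradient f x) + η / 2 * ‖gradient f x‖ ^ 2 ≤ f x := by
  have h := le_add_inner_gradient_add_of_lipschitz_gradient hf hK x (-(η • gradient f x))
  rw [← sub_eq_add_neg, inner_neg_right, real_inner_smul_right, real_inner_self_eq_norm_sq,
    norm_neg, norm_smul, Real.norm_of_nonneg hη] at h
  have hKη := mul_le_one_of_le_one_div hη hηK
  nlinarith [mul_nonneg hη (sq_nonneg ‖gradient f x‖)]

lemma summable_of_add_le_of_nonneg {a b : ℕ → ℝ} (ha : ∀ t, 0 ≤ a t) (hb : ∀ t, 0 ≤ b t)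
    (hab : ∀ t, a (t + 1) + b t ≤ a t) : Summable b := by
  refine summable_of_sum_range_le hb (c := a 0) fun n => ?_
  have htel : ∀ n, ∑ t ∈ Finset.range n, b t ≤ a 0 - a n := by
    intro n
    induction n with
    | zero => simp
    | succ n ih => rw [Finset.sum_range_succ]; linarith [hab n]
  linarith [htel n, ha n]

lemma frequently_lt_of_summable_mul_of_not_summable {η u : ℕ → ℝ} (hη : ∀ t, 0 ≤ η t)
    (hdiv : ¬ Summable η) (hsum : Summable fun t => η t * u t) {ε : ℝ} (hε : 0 < ε) :
    ∃ᶠ t in atTop, u t < ε := by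
  refine fun hge => hdiv ?_
  have : Summable fun t => ε * η t := by
    refine (hsum.of_norm_bounded_eventually_nat ?_ : Summable fun t => ε * η t)
    filter_upwards [hge] with t ht
    rw [Real.norm_of_nonneg (mul_nonneg hε.le (hη t)), mul_comm]
    exact mul_le_mul_of_nonneg_left (not_lt.1 ht) (hη t)
  exact (summable_mul_left_iff hε.ne').1 this

lemma liminf_eq_zero_of_frequently_lt {u : ℕ → ℝ} (hu : ∀ t, 0 ≤ u t)
    (hsmall : ∀ ε > 0, ∃ᶠ t in atTop, u t < ε) : liminf u atTop = 0 := by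
  have hbdd : IsBoundedUnder (· ≥ ·) atTop u := isBoundedUnder_of ⟨0, hu⟩
  have hcobdd : IsCoboundedUnder (· ≥ ·) atTop u := by
    refine ⟨1, fun a ha => ?_⟩
    obtain ⟨t, ht1, ht2⟩ := ((hsmall 1 one_pos).and_eventually ha).exists
    exact ht2.trans ht1.le
  refine le_antisymm (le_of_forall_pos_le_add fun ε hε => ?_)
    (le_liminf_of_le hcobdd (.of_forall hu))
  rw [zero_add]
  exact liminf_le_of_frequently_le ((hsmall ε hε).mono fun _ h => h.le) hbdd

theorem stmt_7_general {p : ℕ} (L : EuclideanSpace ℝ (Fin p) → ℝ)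
    (hdiff : Differentiable ℝ L) (Ls : ℝ)
    (hlip : ∀ x y, ‖gradient L x - gradient L y‖ ≤ Ls * ‖x - y‖)
    (hpos : ∀ x, 0 ≤ L x)
    (η : ℕ → ℝ) (hηpos : ∀ t, 0 < η t)
    (hdiv : ¬ Summable η)
    (T₀ : ℕ) (hT₀ : ∀ t ≥ T₀, η t ≤ 1 / Ls)
    (x : ℕ → EuclideanSpace ℝ (Fin p))
    (hstep : ∀ t, x (t + 1) = x t - η t • gradient L (x t)) :
    Summable (fun t : ℕ => η (t + T₀) * ‖gradient L (x (t + T₀))‖ ^ 2) ∧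
    Filter.liminf (fun t => ‖gradient L (x t)‖) Filter.atTop = 0 ∧
    ∃ l : ℝ, Filter.Tendsto (fun t => L (x t)) Filter.atTop (nhds l) := by
  have hdecr : ∀ t, L (x (t + T₀ + 1)) + η (t + T₀) / 2 * ‖gradient L (x (t + T₀))‖ ^ 2
      ≤ L (x (t + T₀)) := fun t => by
    rw [hstep]
    exact gradient_step_add_le hdiff hlip (hηpos _).le (hT₀ _ (Nat.le_add_left _ _)) _
  have hsum : Summable fun t => η (t + T₀) * ‖gradient L (x (t + T₀))‖ ^ 2 := by
    have := summable_of_add_le_of_nonneg (a := fun t => L (x (t + T₀)))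
      (b := fun t => η (t + T₀) / 2 * ‖gradient L (x (t + T₀))‖ ^ 2) (fun t => hpos _)
      (fun t => by have := hηpos (t + T₀); positivity) fun t => by
        simpa only [Nat.add_right_comm] using hdecr t
    exact (this.mul_left 2).congr fun t => by ring
  refine ⟨hsum, liminf_eq_zero_of_frequently_lt (fun _ => norm_nonneg _) fun ε hε => ?_, ?_⟩
  · have := frequently_lt_of_summable_mul_of_not_summable (fun t => (hηpos (t + T₀)).le)
      (fun h => hdiv ((summable_nat_add_iff T₀).1 h)) hsum (pow_pos hε 2)
    exact (tendsto_add_atTop_nat T₀).frequently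
      (this.mono fun t ht => lt_of_pow_lt_pow_left₀ 2 hε.le ht)
  · have hanti : Antitone fun t => L (x (t + T₀)) := antitone_nat_of_succ_le fun t => by
      have := hηpos (t + T₀)
      rw [Nat.add_right_comm]
      nlinarith [hdecr t, sq_nonneg ‖gradient L (x (t + T₀))‖]
    exact ⟨_, (tendsto_add_atTop_iff_nat T₀).1
      (tendsto_atTop_ciInf hanti ⟨0, fun _ ⟨t, ht⟩ => ht ▸ hpos _⟩)⟩

/-- Convergence of gradient descent under Robbins–Monro step sizes: for a
smooth nonnegative objective, `∑_{t≥T₀} η_t ‖∇L(x_t)‖² < ∞`, the liminf of the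
gradient norms is `0`, and the loss values converge to a finite limit. -/
theorem stmt_7 {p : ℕ} (L : EuclideanSpace ℝ (Fin p) → ℝ)
    (hdiff : Differentiable ℝ L) (Ls : ℝ) (hLs : 0 < Ls)
    (hlip : ∀ x y, ‖gradient L x - gradient L y‖ ≤ Ls * ‖x - y‖)
    (hpos : ∀ x, 0 ≤ L x)
    (η : ℕ → ℝ) (hηpos : ∀ t, 0 < η t)
    (hdiv : ¬ Summable η) (hsq : Summable (fun t => η t ^ 2))
    (T₀ : ℕ) (hT₀ : ∀ t ≥ T₀, η t ≤ 1 / Ls)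
    (x : ℕ → EuclideanSpace ℝ (Fin p))
    (hstep : ∀ t, x (t + 1) = x t - η t • gradient L (x t)) :
    Summable (fun t : ℕ => η (t + T₀) * ‖gradient L (x (t + T₀))‖ ^ 2) ∧
    Filter.liminf (fun t => ‖gradient L (x t)‖) Filter.atTop = 0 ∧
    ∃ l : ℝ, Filter.Tendsto (fun t => L (x t)) Filter.atTop (nhds l) :=
  stmt_7_general L hdiff Ls hlip hpos η hηpos hdiv T₀ hT₀ x hstep
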